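/- Fix x ∈ ℝ^p, y^0, v^0 ∈ ℝ^q and integers D, N ≥ 1, and suppose α ≤ 1/L. Let y^D ∈ ℝ^q satisfy ‖y^D − y*(x)‖² ≤ (1 − αμ)^D ‖y^0 − y*(x)‖² (as produced by D gradient-descent steps on g(x,·) with stepsize α from y^0). Let v̂ = [∇²_y g(x, y^D)]^{−1} ∇_y f(x, y^D), and suppose v^N satisfies the conjugate-gradient bound ‖v^N − v̂‖ ≤ √κ ((√κ − 1)/(√κ + 1))^N ‖v^0 − v̂‖. Let v* be the solution of ∇²_y g(x, y*(x)) v = ∇_y f(x, y*(x)), and define the hypergradient estimate ∇̂Φ(x) = ∇_x f(x, y^D) − ∇_x∇_y g(x, y^D) v^N. Then ‖∇̂Φ(x) − ∇Φ(x)‖² ≤ Γ (1 − αμ)^D ‖y*(x) − y^0‖² + 6L²κ ((√κ − 1)/(√κ + 1))^{2N} ‖v* − v^0‖², where Γ = 3L² + 3τ²M²/μ² + 6L²(1 + √κ)² (κ + ρM/μ²)². -/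

import Mathlib

set_option maxHeartbeats 2000000

open scoped RealInnerProductSpace
open MeasureTheory ProbabilityTheory

noncomputable section

/-- `Eu n` is the Euclidean space `ℝ^n`. -/
abbrev Eu (n : ℕ) := EuclideanSpace ℝ (Fin n)

section Aux
open Set InnerProductSpace Topology

variable {E : Type*} [NormedAddCommGroup E] [InnerProductSpace ℝ E] [CompleteSpace E]

lemma AID.le_sqrt_add_sq (u v : ℝ) : u ≤ Real.sqrt (u ^ 2 + v ^ 2) := by
  nlinarith [Real.sq_sqrt (show (0:ℝ) ≤ u^2+v^2 by positivity), Real.sqrt_nonneg (u^2+v^2)]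

lemma AID.grad_half_sq (μ : ℝ) (y : E) :
    HasGradientAt (fun y : E => μ / 2 * ‖y‖ ^ 2) (μ • y) y := by
  have h1 : HasFDerivAt (fun y : E => ‖y‖ ^ 2) (2 • (innerSL ℝ y)) y :=
    (hasStrictFDerivAt_norm_sq y).hasFDerivAt
  have h2 := h1.const_mul (μ / 2)
  rw [hasGradientAt_iff_hasFDerivAt]
  have : (toDual ℝ E) (μ • y) = (μ / 2) • (2 • (innerSL ℝ y)) := by
    ext v
    simp [toDual_apply_apply, real_inner_smul_left, two_smul]
    ring
  rw [this]; exact h2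

lemma AID.strong_mono {h : E → ℝ} {G : E → E} {μ : ℝ} (hsc : StrongConvexOn Set.univ μ h)
    (hG : ∀ y, HasGradientAt h (G y) y) (a b : E) :
    μ * ‖a - b‖ ^ 2 ≤ ⟪G a - G b, a - b⟫ := by
  set c : E → ℝ := fun y => h y - μ / 2 * ‖y‖ ^ 2 with hc
  have hconv : ConvexOn ℝ Set.univ c := strongConvexOn_iff_convex.mp hsc
  have hGc : ∀ y : E, HasGradientAt c (G y - μ • y) y := fun y =>
    hasGradientAt_iff_hasFDerivAt.mpr (by
      have := ((hG y).hasFDerivAt).sub ((AID.grad_half_sq μ y).hasFDerivAt)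
      rwa [← map_sub (toDual ℝ E)] at this)
  set ln : ℝ → E := fun t => b + t • (a - b) with hln
  have hline : ∀ t : ℝ, HasDerivAt ln (a - b) t := by
    intro t
    simpa [hln] using ((hasDerivAt_id t).smul_const (a - b)).const_add b
  have hφ : ∀ t : ℝ, HasDerivAt (c ∘ ln) (⟪G (ln t), a - b⟫ - μ * ⟪ln t, a - b⟫) t := by
    intro t
    have := ((hGc (ln t)).hasFDerivAt).comp_hasDerivAt t (hline t)
    simpa [toDual_apply_apply] using this
  have hφconv : ConvexOn ℝ Set.univ (c ∘ ln) := by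
    have h1 : ConvexOn ℝ (⇑(AffineMap.lineMap b a) ⁻¹' Set.univ)
        (c ∘ ⇑(AffineMap.lineMap b a)) := hconv.comp_affineMap (AffineMap.lineMap b a)
    have h2 : ⇑(AffineMap.lineMap b a) = ln := by
      funext t; simp [hln, AffineMap.lineMap_apply, smul_sub]; abel
    rwa [h2, Set.preimage_univ] at h1
  have h01 : (0:ℝ) < 1 := one_pos
  have hle1 := hφconv.le_slope_of_hasDerivAt (mem_univ 0) (mem_univ 1) h01 (hφ 0)
  have hle2 := hφconv.slope_le_of_hasDerivAt (mem_univ 0) (mem_univ 1) h01 (hφ 1)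
  have key : ⟪G (ln 0), a - b⟫ - μ * ⟪ln 0, a - b⟫
      ≤ ⟪G (ln 1), a - b⟫ - μ * ⟪ln 1, a - b⟫ := hle1.trans hle2
  have hln0 : ln 0 = b := by simp [hln]
  have hln1 : ln 1 = a := by simp [hln]
  rw [hln0, hln1] at key
  have e1 : ⟪G a - G b, a - b⟫ = ⟪G a, a - b⟫ - ⟪G b, a - b⟫ := inner_sub_left _ _ _
  have e2 : ⟪a - b, a - b⟫ = ⟪a, a - b⟫ - ⟪b, a - b⟫ := inner_sub_left _ _ _
  have e3 : ⟪a - b, a - b⟫ = ‖a - b‖ ^ 2 := real_inner_self_eq_norm_sq _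
  have e4 : μ * ⟪a, a - b⟫ - μ * ⟪b, a - b⟫ = μ * ‖a - b‖ ^ 2 := by
    rw [← e3, e2]; ring
  linarith

lemma AID.coercive_of_mono {G : E → E} {H : E →L[ℝ] E} {μ : ℝ} {y : E}
    (hmono : ∀ a b : E, μ * ‖a - b‖ ^ 2 ≤ ⟪G a - G b, a - b⟫)
    (hH : HasFDerivAt G H y) (v : E) : μ * ‖v‖ ^ 2 ≤ ⟪H v, v⟫ := by
  set φ : ℝ → ℝ := fun t => ⟪v, G (y + t • v)⟫ with hφdef
  have hline : ∀ t : ℝ, HasDerivAt (fun t : ℝ => y + t • v) v t := by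
    intro t; simpa using ((hasDerivAt_id t).smul_const v).const_add y
  have hGd : HasDerivAt (fun t : ℝ => G (y + t • v)) (H v) 0 := by
    have h0 : HasFDerivAt G H (y + (0:ℝ) • v) := by simpa using hH
    exact h0.comp_hasDerivAt 0 (hline 0)
  have hφd : HasDerivAt φ ⟪v, H v⟫ 0 := by
    have := (innerSL ℝ v).hasFDerivAt.comp_hasDerivAt 0 hGd
    simpa [hφdef, Function.comp_def] using this
  have hslope : Filter.Tendsto (slope φ 0) (𝓝[>] (0:ℝ)) (𝓝 ⟪v, H v⟫) :=
    ((hasDerivAt_iff_tendsto_slope.mp hφd).mono_left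
      (nhdsWithin_mono _ (fun t ht => by simpa using ne_of_gt ht)))
  have hbnd : ∀ᶠ t in 𝓝[>] (0:ℝ), μ * ‖v‖ ^ 2 ≤ slope φ 0 t := by
    filter_upwards [self_mem_nhdsWithin] with t ht
    have ht' : (0:ℝ) < t := ht
    have := hmono (y + t • v) y
    have heq : (y + t • v) - y = t • v := by abel
    rw [heq] at this
    have hinner : ⟪G (y + t • v) - G y, t • v⟫ = t * (φ t - φ 0) := by
      rw [real_inner_smul_right]
      simp only [hφdef]
      rw [inner_sub_left]
      simp [real_inner_comm]
    have hnorm : ‖t • v‖ ^ 2 = t ^ 2 * ‖v‖ ^ 2 := by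
      rw [norm_smul]; simp [abs_of_pos ht', mul_pow]
    rw [hnorm, hinner] at this
    rw [slope_def_field, sub_zero, le_div_iff₀ ht']
    nlinarith
  have : μ * ‖v‖ ^ 2 ≤ ⟪v, H v⟫ := ge_of_tendsto hslope hbnd
  rwa [real_inner_comm] at this

open Function Topology in
lemma AID.gPhi_eq {p q : ℕ}
    (f g : Eu p → Eu q → ℝ)
    (hf : ContDiff ℝ 2 (Function.uncurry f))
    (hg : ContDiff ℝ 2 (Function.uncurry g))
    (gradxf : Eu p → Eu q → Eu p) (gradyf gradyg : Eu p → Eu q → Eu q)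
    (hgradxf : ∀ x y, HasGradientAt (fun x' => f x' y) (gradxf x y) x)
    (hgradyf : ∀ x y, HasGradientAt (fun y' => f x y') (gradyf x y) y)
    (hgradyg : ∀ x y, HasGradientAt (fun y' => g x y') (gradyg x y) y)
    (Hg : Eu p → Eu q → (Eu q →L[ℝ] Eu q))
    (Jg : Eu p → Eu q → (Eu q →L[ℝ] Eu p))
    (hHg : ∀ x y, HasFDerivAt (fun y' => gradyg x y') (Hg x y) y)
    (hJg : ∀ x y, HasFDerivAt (fun x' => gradyg x' y) (ContinuousLinearMap.adjoint (Jg x y)) x)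
    (Hinv : Eu p → Eu q → (Eu q →L[ℝ] Eu q))
    (hHinv : ∀ x y, (Hg x y).comp (Hinv x y) = ContinuousLinearMap.id ℝ (Eu q) ∧
      (Hinv x y).comp (Hg x y) = ContinuousLinearMap.id ℝ (Eu q))
    (ystar : Eu p → Eu q) (x : Eu p)
    (hcrit : ∀ x', gradyg x' (ystar x') = 0)
    (hystarcont : ContinuousAt ystar x)
    (vstar : Eu q)
    (hvstar : Hg x (ystar x) vstar = gradyf x (ystar x))
    (gPhi : Eu p)
    (hgPhi : HasGradientAt (fun x' => f x' (ystar x')) gPhi x) :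
    gPhi = gradxf x (ystar x) - Jg x (ystar x) vstar := by
  classical
  set Y := ystar x with hY
  -- joint smoothness of the y-gradient of g
  have hgdiff : Differentiable ℝ (uncurry g) := hg.differentiable (by norm_num)
  have hgradrep : ∀ z : Eu p × Eu q, (toDual ℝ (Eu q)) (gradyg z.1 z.2)
      = (fderiv ℝ (uncurry g) z).comp (ContinuousLinearMap.inr ℝ (Eu p) (Eu q)) := by
    intro z
    have hD : HasFDerivAt (uncurry g) (fderiv ℝ (uncurry g) z) z := (hgdiff z).hasFDerivAt
    have hD' : HasFDerivAt (uncurry g) (fderiv ℝ (uncurry g) z) (z.1, z.2) := by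
      simpa using hD
    have h1 : HasFDerivAt (fun y' => g z.1 y')
        ((fderiv ℝ (uncurry g) z).comp (ContinuousLinearMap.inr ℝ (Eu p) (Eu q))) z.2 := by
      have := hD'.comp z.2 (hasFDerivAt_prodMk_right z.1 z.2)
      simpa [Function.uncurry, Function.comp_def] using this
    exact (hgradyg z.1 z.2).hasFDerivAt.unique h1
  have hFsmooth : ContDiff ℝ 1 (fun z : Eu p × Eu q => gradyg z.1 z.2) := by
    have h1 : ContDiff ℝ 1 (fun z => fderiv ℝ (uncurry g) z) :=
      hg.fderiv_right (by norm_num)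
    have h2 : ContDiff ℝ 1 (fun z =>
        (fderiv ℝ (uncurry g) z).comp (ContinuousLinearMap.inr ℝ (Eu p) (Eu q))) :=
      h1.clm_comp contDiff_const
    have h3 : ContDiff ℝ 1 (fun z : Eu p × Eu q => (toDual ℝ (Eu q)).symm
        ((fderiv ℝ (uncurry g) z).comp (ContinuousLinearMap.inr ℝ (Eu p) (Eu q)))) := by
      exact ((toDual ℝ (Eu q)).symm.toContinuousLinearEquiv.toContinuousLinearMap).contDiff.comp h2
    convert h3 using 2 with z
    rw [← hgradrep z, LinearIsometryEquiv.symm_apply_apply]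
  set Fm : Eu p × Eu q → Eu q := fun z => gradyg z.1 z.2 with hFm
  set z₀ : Eu p × Eu q := (x, Y) with hz₀
  set F' : (Eu p × Eu q) →L[ℝ] Eu q := fderiv ℝ Fm z₀ with hF'def
  have hF' : HasStrictFDerivAt Fm F' z₀ :=
    (hFsmooth.contDiffAt).hasStrictFDerivAt (by norm_num)
  have hF'd : HasFDerivAt Fm F' z₀ := hF'.hasFDerivAt
  set A : Eu p →L[ℝ] Eu q := ContinuousLinearMap.adjoint (Jg x Y) with hA
  set H : Eu q →L[ℝ] Eu q := Hg x Y with hH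
  set Hi : Eu q →L[ℝ] Eu q := Hinv x Y with hHi
  have hpartx : F'.comp (ContinuousLinearMap.inl ℝ (Eu p) (Eu q)) = A := by
    have h1 : HasFDerivAt (fun x' => gradyg x' Y)
        (F'.comp (ContinuousLinearMap.inl ℝ (Eu p) (Eu q))) x := by
      have := hF'd.comp (f := fun e : Eu p => ((e, Y) : Eu p × Eu q)) x (hasFDerivAt_prodMk_left x Y)
      simpa [hFm, Function.comp_def] using this
    exact h1.unique (hJg x Y)
  have hparty : F'.comp (ContinuousLinearMap.inr ℝ (Eu p) (Eu q)) = H := by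
    have h1 : HasFDerivAt (fun y' => gradyg x y')
        (F'.comp (ContinuousLinearMap.inr ℝ (Eu p) (Eu q))) Y := by
      have := hF'd.comp Y (hasFDerivAt_prodMk_right x Y)
      simpa [hFm, Function.comp_def] using this
    exact h1.unique (hHg x Y)
  have hF'app : ∀ w : Eu p × Eu q, F' w = A w.1 + H w.2 := by
    intro w
    have hw : w = ((w.1, 0) : Eu p × Eu q) + (0, w.2) := by simp
    have h1 : F' (w.1, 0) = A w.1 := by rw [← hpartx]; rfl
    have h2 : F' ((0 : Eu p), w.2) = H w.2 := by rw [← hparty]; rfl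
    calc F' w = F' ((w.1, 0) + ((0 : Eu p), w.2)) := by rw [← hw]
      _ = F' (w.1, 0) + F' ((0 : Eu p), w.2) := map_add _ _ _
      _ = A w.1 + H w.2 := by rw [h1, h2]
  -- the equivalence
  have hHgHi : ∀ w, H (Hi w) = w := fun w => DFunLike.congr_fun (hHinv x Y).1 w
  have hHiHg : ∀ w, Hi (H w) = w := fun w => DFunLike.congr_fun (hHinv x Y).2 w
  set T1 : (Eu p × Eu q) →L[ℝ] (Eu p × Eu q) :=
    (ContinuousLinearMap.fst ℝ (Eu p) (Eu q)).prod F' with hT1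
  set T2 : (Eu p × Eu q) →L[ℝ] (Eu p × Eu q) :=
    (ContinuousLinearMap.fst ℝ (Eu p) (Eu q)).prod
      (Hi.comp ((ContinuousLinearMap.snd ℝ (Eu p) (Eu q))
        - A.comp (ContinuousLinearMap.fst ℝ (Eu p) (Eu q)))) with hT2
  have hT1app : ∀ w : Eu p × Eu q, T1 w = (w.1, A w.1 + H w.2) := by
    intro w; simp [hT1, hF'app w]
  have hT2app : ∀ w : Eu p × Eu q, T2 w = (w.1, Hi (w.2 - A w.1)) := by
    intro w; simp [hT2]
  have hleft : Function.LeftInverse T2 T1 := by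
    intro w
    rw [hT1app, hT2app]
    simp only [add_sub_cancel_left]
    rw [hHiHg]
  have hright : Function.RightInverse T2 T1 := by
    intro w
    rw [hT2app, hT1app]
    simp only []
    rw [hHgHi]
    simp
  set e : (Eu p × Eu q) ≃L[ℝ] (Eu p × Eu q) :=
    ContinuousLinearEquiv.equivOfInverse T1 T2 hleft hright with he
  -- the map Ψ and its local inverse
  set Ψ : Eu p × Eu q → Eu p × Eu q := fun z => (z.1, Fm z) with hΨ
  have hΨstrict : HasStrictFDerivAt Ψ (e : (Eu p × Eu q) →L[ℝ] (Eu p × Eu q)) z₀ := by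
    have hfst : HasStrictFDerivAt (fun z : Eu p × Eu q => z.1)
        (ContinuousLinearMap.fst ℝ (Eu p) (Eu q)) z₀ :=
      (ContinuousLinearMap.fst ℝ (Eu p) (Eu q)).hasStrictFDerivAt
    have : (e : (Eu p × Eu q) →L[ℝ] (Eu p × Eu q)) = T1 := rfl
    rw [this, hT1]
    exact hfst.prodMk hF'
  set ψ : Eu p × Eu q → Eu p × Eu q := hΨstrict.localInverse Ψ e z₀ with hψ
  have hΨz₀ : Ψ z₀ = (x, 0) := by
    simp only [hΨ, hFm, hz₀]
    rw [hY, hcrit x]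
  have hψst : HasStrictFDerivAt ψ ((e.symm : (Eu p × Eu q) →L[ℝ] (Eu p × Eu q))) ((x, 0)) := by
    rw [← hΨz₀]
    exact hΨstrict.to_localInverse
  have hev : ∀ᶠ z in 𝓝 z₀, ψ (Ψ z) = z := hΨstrict.eventually_left_inverse
  have hcontpair : ContinuousAt (fun x' => ((x', ystar x') : Eu p × Eu q)) x :=
    continuousAt_id.prodMk hystarcont
  have htend : Filter.Tendsto (fun x' => ((x', ystar x') : Eu p × Eu q)) (𝓝 x) (𝓝 z₀) := by
    have : ((x, ystar x) : Eu p × Eu q) = z₀ := rfl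
    rw [← this]
    exact hcontpair
  have hev2 : ∀ᶠ x' in 𝓝 x, ψ (x', (0 : Eu q)) = (x', ystar x') := by
    filter_upwards [htend.eventually hev] with x' hx'
    have hzero : Ψ (x', ystar x') = (x', (0 : Eu q)) := by
      simp only [hΨ, hFm]
      rw [hcrit x']
    rw [← hzero]
    exact hx'
  have hev3 : ystar =ᶠ[𝓝 x] (fun x' => (ψ (x', (0 : Eu q))).2) := by
    filter_upwards [hev2] with x' h
    rw [h]
  -- derivative of ystar
  set T : Eu p →L[ℝ] Eu q := (ContinuousLinearMap.snd ℝ (Eu p) (Eu q)).comp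
    (((e.symm : (Eu p × Eu q) →L[ℝ] (Eu p × Eu q))).comp
      (ContinuousLinearMap.inl ℝ (Eu p) (Eu q))) with hT
  have hinner : HasFDerivAt (fun x' => ψ (x', (0 : Eu q)))
      (((e.symm : (Eu p × Eu q) →L[ℝ] (Eu p × Eu q))).comp
        (ContinuousLinearMap.inl ℝ (Eu p) (Eu q))) x :=
    (hψst.hasFDerivAt).comp x (hasFDerivAt_prodMk_left x (0 : Eu q))
  have hcompd : HasFDerivAt (fun x' => (ψ (x', (0 : Eu q))).2) T x :=
    ((ContinuousLinearMap.snd ℝ (Eu p) (Eu q)).hasFDerivAt).comp x hinner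
  have hystard : HasFDerivAt ystar T x := hcompd.congr_of_eventuallyEq hev3
  have hTapp : ∀ u : Eu p, T u = - Hi (A u) := by
    intro u
    have h1 : (e.symm : (Eu p × Eu q) →L[ℝ] (Eu p × Eu q)) = T2 := rfl
    simp only [hT, ContinuousLinearMap.coe_comp', Function.comp_apply, h1]
    rw [show (ContinuousLinearMap.inl ℝ (Eu p) (Eu q)) u = ((u, 0) : Eu p × Eu q) from rfl]
    rw [hT2app]
    simp
  -- joint derivative of f
  set Df : (Eu p × Eu q) →L[ℝ] ℝ := fderiv ℝ (uncurry f) z₀ with hDfdef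
  have hDf : HasFDerivAt (uncurry f) Df z₀ :=
    ((hf.differentiable (by norm_num)) z₀).hasFDerivAt
  have hDf' : HasFDerivAt (uncurry f) Df ((x, Y) : Eu p × Eu q) := hDf
  have hDfx : Df.comp (ContinuousLinearMap.inl ℝ (Eu p) (Eu q))
      = (toDual ℝ (Eu p)) (gradxf x Y) := by
    have h1 : HasFDerivAt (fun x' => f x' Y)
        (Df.comp (ContinuousLinearMap.inl ℝ (Eu p) (Eu q))) x := by
      have := hDf'.comp (f := fun e : Eu p => ((e, Y) : Eu p × Eu q)) x (hasFDerivAt_prodMk_left x Y)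
      simpa [Function.uncurry, Function.comp_def] using this
    exact h1.unique (hgradxf x Y).hasFDerivAt
  have hDfy : Df.comp (ContinuousLinearMap.inr ℝ (Eu p) (Eu q))
      = (toDual ℝ (Eu q)) (gradyf x Y) := by
    have h1 : HasFDerivAt (fun y' => f x y')
        (Df.comp (ContinuousLinearMap.inr ℝ (Eu p) (Eu q))) Y := by
      have := hDf'.comp Y (hasFDerivAt_prodMk_right x Y)
      simpa [Function.uncurry, Function.comp_def] using this
    exact h1.unique (hgradyf x Y).hasFDerivAt
  have hDfapp : ∀ w : Eu p × Eu q, Df w = ⟪gradxf x Y, w.1⟫ + ⟪gradyf x Y, w.2⟫ := by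
    intro w
    have hw : w = ((w.1, 0) : Eu p × Eu q) + (0, w.2) := by simp
    have h1 : Df (w.1, 0) = ⟪gradxf x Y, w.1⟫ := by
      have := DFunLike.congr_fun hDfx w.1
      simpa [toDual_apply_apply] using this
    have h2 : Df ((0 : Eu p), w.2) = ⟪gradyf x Y, w.2⟫ := by
      have := DFunLike.congr_fun hDfy w.2
      simpa [toDual_apply_apply] using this
    calc Df w = Df ((w.1, 0) + ((0 : Eu p), w.2)) := by rw [← hw]
      _ = Df (w.1, 0) + Df ((0 : Eu p), w.2) := map_add _ _ _
      _ = ⟪gradxf x Y, w.1⟫ + ⟪gradyf x Y, w.2⟫ := by rw [h1, h2]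
  -- derivative of Φ
  set P : Eu p →L[ℝ] (Eu p × Eu q) := (ContinuousLinearMap.id ℝ (Eu p)).prod T with hP
  have hpair : HasFDerivAt (fun x' => ((x', ystar x') : Eu p × Eu q)) P x :=
    (hasFDerivAt_id x).prodMk hystard
  have hΦd : HasFDerivAt (fun x' => f x' (ystar x')) (Df.comp P) x := by
    have := hDf'.comp x hpair
    simpa [Function.uncurry, Function.comp_def] using this
  have hgPhieq : (toDual ℝ (Eu p)) gPhi = Df.comp P := (hgPhi.hasFDerivAt).unique hΦd
  -- symmetry of the Hessian
  have hHsym : ∀ v w : Eu q, ⟪H v, w⟫ = ⟪v, H w⟫ := by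
    intro v w
    have hx2 : HasFDerivAt (fun y => (toDual ℝ (Eu q)) (gradyg x y))
        (((toDual ℝ (Eu q)).toContinuousLinearEquiv.toContinuousLinearMap).comp H) Y := by
      have := ((toDual ℝ (Eu q)).toContinuousLinearEquiv.toContinuousLinearMap).hasFDerivAt.comp
        Y (hHg x Y)
      simpa [Function.comp_def] using this
    have hsymm := second_derivative_symmetric
      (f := g x) (f' := fun y => (toDual ℝ (Eu q)) (gradyg x y))
      (fun y => (hgradyg x y).hasFDerivAt) hx2 v w
    have h1 : ((toDual ℝ (Eu q)) (H v)) w = ((toDual ℝ (Eu q)) (H w)) v := hsymm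
    rw [toDual_apply_apply, toDual_apply_apply] at h1
    rw [h1, real_inner_comm]
  -- conclude
  apply ext_inner_right ℝ
  intro u
  have h1 : ⟪gPhi, u⟫ = Df (P u) := by
    have := DFunLike.congr_fun hgPhieq u
    simpa [toDual_apply_apply] using this
  have hPu : P u = ((u, T u) : Eu p × Eu q) := rfl
  rw [h1, hPu, hDfapp]
  simp only []
  rw [hTapp u]
  have h2 : ⟪gradyf x Y, - Hi (A u)⟫ = - ⟪H vstar, Hi (A u)⟫ := by
    rw [inner_neg_right, hvstar]
  have h3 : ⟪H vstar, Hi (A u)⟫ = ⟪vstar, H (Hi (A u))⟫ := hHsym vstar (Hi (A u))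
  have h4 : H (Hi (A u)) = A u := hHgHi (A u)
  have h5 : ⟪vstar, A u⟫ = ⟪Jg x Y vstar, u⟫ :=
    ContinuousLinearMap.adjoint_inner_right (Jg x Y) vstar u
  rw [h2, h3, h4, h5]
  rw [inner_sub_left]
  ring

end Aux

/-- Lemma on the AID hypergradient estimation error: with `D` inner GD steps
and `N` CG steps, `‖∇̂Φ(x) − ∇Φ(x)‖² ≤ Γ(1−αμ)^D ‖y*(x)−y⁰‖² + 6L²κ((√κ−1)/(√κ+1))^{2N}‖v*−v⁰‖²`. -/
theorem aid_hypergradient_error {p q : ℕ}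
    (f g : Eu p → Eu q → ℝ)
    (hf : ContDiff ℝ 2 (Function.uncurry f))
    (hg : ContDiff ℝ 2 (Function.uncurry g))
    (μ L M τ ρ : ℝ) (hμ : 0 < μ) (hμL : μ ≤ L)
    (gradxf gradxg : Eu p → Eu q → Eu p)
    (gradyf gradyg : Eu p → Eu q → Eu q)
    (hgradxf : ∀ x y, HasGradientAt (fun x' => f x' y) (gradxf x y) x)
    (hgradyf : ∀ x y, HasGradientAt (fun y' => f x y') (gradyf x y) y)
    (hgradxg : ∀ x y, HasGradientAt (fun x' => g x' y) (gradxg x y) x)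
    (hgradyg : ∀ x y, HasGradientAt (fun y' => g x y') (gradyg x y) y)
    (Hg : Eu p → Eu q → (Eu q →L[ℝ] Eu q))
    (Jg : Eu p → Eu q → (Eu q →L[ℝ] Eu p))
    (hHg : ∀ x y, HasFDerivAt (fun y' => gradyg x y') (Hg x y) y)
    (hJg : ∀ x y, HasFDerivAt (fun x' => gradyg x' y) (ContinuousLinearMap.adjoint (Jg x y)) x)
    (hsc : ∀ x, StrongConvexOn Set.univ μ (g x))
    (hfLip : ∀ x y x' y', |f x y - f x' y'| ≤ M * Real.sqrt (‖x - x'‖ ^ 2 + ‖y - y'‖ ^ 2))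
    (hgradfLip : ∀ x y x' y',
      Real.sqrt (‖gradxf x y - gradxf x' y'‖ ^ 2 + ‖gradyf x y - gradyf x' y'‖ ^ 2)
        ≤ L * Real.sqrt (‖x - x'‖ ^ 2 + ‖y - y'‖ ^ 2))
    (hgradgLip : ∀ x y x' y',
      Real.sqrt (‖gradxg x y - gradxg x' y'‖ ^ 2 + ‖gradyg x y - gradyg x' y'‖ ^ 2)
        ≤ L * Real.sqrt (‖x - x'‖ ^ 2 + ‖y - y'‖ ^ 2))
    (hJgLip : ∀ x y x' y', ‖Jg x y - Jg x' y'‖ ≤ τ * Real.sqrt (‖x - x'‖ ^ 2 + ‖y - y'‖ ^ 2))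
    (hHgLip : ∀ x y x' y', ‖Hg x y - Hg x' y'‖ ≤ ρ * Real.sqrt (‖x - x'‖ ^ 2 + ‖y - y'‖ ^ 2))
    (ystar : Eu p → Eu q)
    (hystar : ∀ x, IsMinOn (g x) Set.univ (ystar x))
    (κ : ℝ) (hκ : κ = L / μ)
    (α : ℝ) (hα : 0 < α) (hαL : α ≤ 1 / L)
    (D N : ℕ) (hD : 1 ≤ D) (hN : 1 ≤ N)
    (Hinv : Eu p → Eu q → (Eu q →L[ℝ] Eu q))
    (hHinv : ∀ x y, (Hg x y).comp (Hinv x y) = ContinuousLinearMap.id ℝ (Eu q) ∧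
      (Hinv x y).comp (Hg x y) = ContinuousLinearMap.id ℝ (Eu q))
    (x : Eu p) (y0 v0 yD vN : Eu q)
    (hyD : ‖yD - ystar x‖ ^ 2 ≤ (1 - α * μ) ^ D * ‖y0 - ystar x‖ ^ 2)
    (hvNcg : ‖vN - Hinv x yD (gradyf x yD)‖
      ≤ Real.sqrt κ * ((Real.sqrt κ - 1) / (Real.sqrt κ + 1)) ^ N
        * ‖v0 - Hinv x yD (gradyf x yD)‖)
    (vstar : Eu q)
    (hvstar : Hg x (ystar x) vstar = gradyf x (ystar x))
    (gPhi : Eu p)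
    (hgPhi : HasGradientAt (fun x' => f x' (ystar x')) gPhi x)
    (Γ : ℝ)
    (hΓ : Γ = 3 * L ^ 2 + 3 * τ ^ 2 * M ^ 2 / μ ^ 2
      + 6 * L ^ 2 * (1 + Real.sqrt κ) ^ 2 * (κ + ρ * M / μ ^ 2) ^ 2) :
    ‖(gradxf x yD - Jg x yD vN) - gPhi‖ ^ 2
      ≤ Γ * (1 - α * μ) ^ D * ‖ystar x - y0‖ ^ 2
        + 6 * L ^ 2 * κ * ((Real.sqrt κ - 1) / (Real.sqrt κ + 1)) ^ (2 * N)
          * ‖vstar - v0‖ ^ 2 := by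
  classical
  have hL0 : 0 < L := lt_of_lt_of_le hμ hμL
  have hαμ : α * μ ≤ 1 := by
    have h1 : α * μ ≤ (1 / L) * μ := by
      apply mul_le_mul_of_nonneg_right hαL hμ.le
    have h2 : (1 / L) * μ ≤ 1 := by
      rw [div_mul_eq_mul_div, one_mul, div_le_one hL0]; exact hμL
    linarith
  have h1αμ : (0:ℝ) ≤ 1 - α * μ := by linarith
  have hκ0 : 0 ≤ κ := by rw [hκ]; positivity
  have hκ1 : 1 ≤ κ := by rw [hκ, le_div_iff₀ hμ, one_mul]; exact hμL
  have hsκ : 1 ≤ Real.sqrt κ := by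
    rw [show (1:ℝ) = Real.sqrt 1 by simp]
    exact Real.sqrt_le_sqrt hκ1
  set r : ℝ := (Real.sqrt κ - 1) / (Real.sqrt κ + 1) with hrdef
  have hr0 : 0 ≤ r := by
    apply div_nonneg (by linarith) (by linarith)
  have hr1 : r ≤ 1 := by
    rw [hrdef, div_le_one (by linarith)]; linarith
  have hrN1 : r ^ N ≤ 1 := pow_le_one₀ hr0 hr1
  have hrN0 : 0 ≤ r ^ N := pow_nonneg hr0 N
  have hΓ0 : 0 ≤ Γ := by rw [hΓ]; positivity
  have hpowD : 0 ≤ (1 - α * μ) ^ D := pow_nonneg h1αμ D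
  have hr2N : 0 ≤ r ^ (2 * N) := pow_nonneg hr0 _
  -- trivial case q = 0
  rcases Nat.eq_zero_or_pos q with hq0 | hq
  · subst hq0
    have hyeq : yD = ystar x := Subsingleton.elim _ _
    have hveq : vN = (0 : Eu 0) := Subsingleton.elim _ _
    have hgeq : gPhi = gradxf x yD := by
      have h1 : (fun x' => f x' (ystar x')) = fun x' => f x' yD := by
        funext x'; exact congrArg (f x') (Subsingleton.elim _ _)
      have h2 : HasGradientAt (fun x' => f x' yD) gPhi x := h1 ▸ hgPhi
      exact h2.unique (hgradxf x yD)
    have hLHS : gradxf x yD - Jg x yD vN - gPhi = 0 := by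
      rw [hveq, map_zero, hgeq]; abel
    rw [hLHS]
    simp only [norm_zero]
    have : (0:ℝ) ≤ Γ * (1 - α * μ) ^ D * ‖ystar x - y0‖ ^ 2 :=
      mul_nonneg (mul_nonneg hΓ0 hpowD) (sq_nonneg _)
    have h2 : (0:ℝ) ≤ 6 * L ^ 2 * κ * r ^ (2 * N) * ‖vstar - v0‖ ^ 2 := by
      apply mul_nonneg (mul_nonneg (mul_nonneg (by positivity) hκ0) hr2N) (sq_nonneg _)
    have : (0:ℝ)^2 = 0 := by norm_num
    nlinarith
  -- main case: q ≥ 1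
  obtain ⟨u, hu⟩ : ∃ u : Eu q, ‖u‖ = 1 :=
    ⟨EuclideanSpace.single ⟨0, hq⟩ 1, by simp [EuclideanSpace.norm_single]⟩
  -- nonnegativity of the constants
  have hM0 : 0 ≤ M := by
    have := hfLip x y0 x (y0 + u)
    have hs : Real.sqrt (‖x - x‖ ^ 2 + ‖y0 - (y0 + u)‖ ^ 2) = 1 := by
      simp [hu, Real.sqrt_sq]
    rw [hs] at this
    calc (0:ℝ) ≤ |f x y0 - f x (y0 + u)| := abs_nonneg _
      _ ≤ M * 1 := this
      _ = M := mul_one M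
  have hsqrt1 : ∀ y : Eu q, Real.sqrt (‖x - x‖ ^ 2 + ‖y - (y + u)‖ ^ 2) = 1 := by
    intro y; simp [hu, Real.sqrt_sq]
  have hτ0 : 0 ≤ τ := by
    have := hJgLip x y0 x (y0 + u)
    rw [hsqrt1 y0, mul_one] at this
    exact le_trans (norm_nonneg _) this
  have hρ0 : 0 ≤ ρ := by
    have := hHgLip x y0 x (y0 + u)
    rw [hsqrt1 y0, mul_one] at this
    exact le_trans (norm_nonneg _) this
  -- componentwise Lipschitz facts at fixed x
  have hxfLip : ∀ y y' : Eu q, ‖gradxf x y - gradxf x y'‖ ≤ L * ‖y - y'‖ := by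
    intro y y'
    have h1 := hgradfLip x y x y'
    have h2 : ‖gradxf x y - gradxf x y'‖
        ≤ Real.sqrt (‖gradxf x y - gradxf x y'‖ ^ 2 + ‖gradyf x y - gradyf x y'‖ ^ 2) :=
      AID.le_sqrt_add_sq _ _
    have h3 : Real.sqrt (‖x - x‖ ^ 2 + ‖y - y'‖ ^ 2) = ‖y - y'‖ := by
      simp [Real.sqrt_sq]
    rw [h3] at h1
    linarith
  have hyfLip : ∀ y y' : Eu q, ‖gradyf x y - gradyf x y'‖ ≤ L * ‖y - y'‖ := by
    intro y y'
    have h1 := hgradfLip x y x y'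
    have h2 : ‖gradyf x y - gradyf x y'‖
        ≤ Real.sqrt (‖gradxf x y - gradxf x y'‖ ^ 2 + ‖gradyf x y - gradyf x y'‖ ^ 2) := by
      rw [add_comm]; exact AID.le_sqrt_add_sq _ _
    have h3 : Real.sqrt (‖x - x‖ ^ 2 + ‖y - y'‖ ^ 2) = ‖y - y'‖ := by
      simp [Real.sqrt_sq]
    rw [h3] at h1
    linarith
  have hygLipx : ∀ (x' : Eu p) (y : Eu q), ‖gradyg x' y - gradyg x y‖ ≤ L * ‖x' - x‖ := by
    intro x' y
    have h1 := hgradgLip x' y x y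
    have h2 : ‖gradyg x' y - gradyg x y‖
        ≤ Real.sqrt (‖gradxg x' y - gradxg x y‖ ^ 2 + ‖gradyg x' y - gradyg x y‖ ^ 2) := by
      rw [add_comm]; exact AID.le_sqrt_add_sq _ _
    have h3 : Real.sqrt (‖x' - x‖ ^ 2 + ‖y - y‖ ^ 2) = ‖x' - x‖ := by
      simp [Real.sqrt_sq]
    rw [h3] at h1
    linarith
  have hHLip : ∀ y y' : Eu q, ‖Hg x y - Hg x y'‖ ≤ ρ * ‖y - y'‖ := by
    intro y y'
    have h1 := hHgLip x y x y'
    have h3 : Real.sqrt (‖x - x‖ ^ 2 + ‖y - y'‖ ^ 2) = ‖y - y'‖ := by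
      simp [Real.sqrt_sq]
    rwa [h3] at h1
  have hJLip : ∀ y y' : Eu q, ‖Jg x y - Jg x y'‖ ≤ τ * ‖y - y'‖ := by
    intro y y'
    have h1 := hJgLip x y x y'
    have h3 : Real.sqrt (‖x - x‖ ^ 2 + ‖y - y'‖ ^ 2) = ‖y - y'‖ := by
      simp [Real.sqrt_sq]
    rwa [h3] at h1
  -- strong monotonicity and coercivity
  have hmono : ∀ (x' : Eu p) (a b : Eu q),
      μ * ‖a - b‖ ^ 2 ≤ ⟪gradyg x' a - gradyg x' b, a - b⟫ := fun x' =>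
    AID.strong_mono (hsc x') (hgradyg x')
  have hcoer : ∀ (y : Eu q) (v : Eu q), μ * ‖v‖ ^ 2 ≤ ⟪Hg x y v, v⟫ := fun y v =>
    AID.coercive_of_mono (hmono x) (hHg x y) v
  have hHlow : ∀ (y : Eu q) (v : Eu q), μ * ‖v‖ ≤ ‖Hg x y v‖ := by
    intro y v
    rcases eq_or_ne v 0 with rfl | hv
    · simp
    · have h1 := hcoer y v
      have h2 : ⟪Hg x y v, v⟫ ≤ ‖Hg x y v‖ * ‖v‖ := real_inner_le_norm _ _
      have hv0 : 0 < ‖v‖ := norm_pos_iff.mpr hv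
      have := le_trans h1 h2
      rw [pow_two] at this
      nlinarith
  have hHgHinv : ∀ (y : Eu q) (w : Eu q), Hg x y (Hinv x y w) = w := by
    intro y w
    have := (hHinv x y).1
    exact DFunLike.congr_fun this w
  have hHinvHg : ∀ (y : Eu q) (w : Eu q), Hinv x y (Hg x y w) = w := by
    intro y w
    have := (hHinv x y).2
    exact DFunLike.congr_fun this w
  have hHinvB : ∀ (y : Eu q) (w : Eu q), ‖Hinv x y w‖ ≤ μ⁻¹ * ‖w‖ := by
    intro y w
    have h1 := hHlow y (Hinv x y w)
    rw [hHgHinv y w] at h1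
    rw [inv_mul_eq_div, le_div_iff₀ hμ, mul_comm]
    exact h1
  -- operator norm bound for Jg
  have hJB : ∀ y : Eu q, ‖Jg x y‖ ≤ L := by
    intro y
    have hlip : ∀ᶠ x' in nhds x, ‖gradyg x' y - gradyg x y‖ ≤ L * ‖x' - x‖ :=
      Filter.Eventually.of_forall (fun x' => hygLipx x' y)
    have h1 : ‖ContinuousLinearMap.adjoint (Jg x y)‖ ≤ L :=
      (hJg x y).le_of_lip' hL0.le hlip
    rwa [LinearIsometryEquiv.norm_map ContinuousLinearMap.adjoint (Jg x y)] at h1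
  -- gradient of f in y is bounded by M
  have hyfM : ∀ y : Eu q, ‖gradyf x y‖ ≤ M := by
    intro y
    have hlip : ∀ᶠ y' in nhds y, ‖f x y' - f x y‖ ≤ M * ‖y' - y‖ := by
      apply Filter.Eventually.of_forall
      intro y'
      have h1 := hfLip x y' x y
      have h3 : Real.sqrt (‖x - x‖ ^ 2 + ‖y' - y‖ ^ 2) = ‖y' - y‖ := by
        simp [Real.sqrt_sq]
      rw [h3] at h1
      simpa [Real.norm_eq_abs] using h1
    have h1 : ‖(InnerProductSpace.toDual ℝ (Eu q)) (gradyf x y)‖ ≤ M :=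
      ((hgradyf x y).hasFDerivAt).le_of_lip' hM0 hlip
    rwa [LinearIsometryEquiv.norm_map] at h1
  -- vstar facts
  have hvstar_alt : Hinv x (ystar x) (gradyf x (ystar x)) = vstar := by
    rw [← hvstar, hHinvHg]
  have hvstarM : ‖vstar‖ ≤ M / μ := by
    rw [← hvstar_alt]
    calc ‖Hinv x (ystar x) (gradyf x (ystar x))‖ ≤ μ⁻¹ * ‖gradyf x (ystar x)‖ :=
        hHinvB _ _
      _ ≤ μ⁻¹ * M := by
          apply mul_le_mul_of_nonneg_left (hyfM _) (by positivity)
      _ = M / μ := by rw [inv_mul_eq_div]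
  -- critical point property
  have hcrit : ∀ x' : Eu p, gradyg x' (ystar x') = 0 := by
    intro x'
    have hmin : IsLocalMin (g x') (ystar x') := (hystar x').isLocalMin Filter.univ_mem
    have h0 := hmin.hasFDerivAt_eq_zero (hgradyg x' (ystar x')).hasFDerivAt
    have h1 := congrArg (InnerProductSpace.toDual ℝ (Eu q)).symm h0
    simpa using h1
  -- Lipschitz continuity of ystar at x
  have hystarLip : ∀ x' : Eu p, ‖ystar x' - ystar x‖ ≤ (L / μ) * ‖x' - x‖ := by
    intro x'
    have h1 := hmono x' (ystar x) (ystar x')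
    rw [hcrit x', sub_zero] at h1
    have h2 : ⟪gradyg x' (ystar x), ystar x - ystar x'⟫
        ≤ ‖gradyg x' (ystar x)‖ * ‖ystar x - ystar x'‖ := real_inner_le_norm _ _
    have h3 : ‖gradyg x' (ystar x)‖ ≤ L * ‖x' - x‖ := by
      have := hygLipx x' (ystar x); rwa [hcrit x, sub_zero] at this
    have h4 : ‖ystar x - ystar x'‖ = ‖ystar x' - ystar x‖ := norm_sub_rev _ _
    rw [h4] at h1 h2
    have hd0 : (0:ℝ) ≤ ‖ystar x' - ystar x‖ := norm_nonneg _
    rcases eq_or_lt_of_le hd0 with heq | hlt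
    · rw [← heq]; positivity
    · rw [div_mul_eq_mul_div, le_div_iff₀ hμ]
      nlinarith [mul_le_mul_of_nonneg_right h3 hd0]
  have hystarcont : ContinuousAt ystar x := by
    rw [Metric.continuousAt_iff]
    intro ε hε
    refine ⟨ε / (L / μ + 1), by positivity, fun {x'} hx' => ?_⟩
    have h1 := hystarLip x'
    rw [dist_eq_norm] at *
    have h2 : (0:ℝ) < L / μ + 1 := by positivity
    calc ‖ystar x' - ystar x‖ ≤ (L / μ) * ‖x' - x‖ := h1
      _ ≤ (L / μ + 1) * ‖x' - x‖ := by nlinarith [norm_nonneg (x' - x)]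
      _ < (L / μ + 1) * (ε / (L / μ + 1)) := by
          exact mul_lt_mul_of_pos_left hx' h2
      _ = ε := by field_simp
  -- the hypergradient formula
  have hkey : gPhi = gradxf x (ystar x) - Jg x (ystar x) vstar :=
    AID.gPhi_eq f g hf hg gradxf gradyf gradyg hgradxf hgradyf hgradyg Hg Jg hHg hJg
      Hinv hHinv ystar x hcrit hystarcont vstar hvstar gPhi hgPhi
  -- quantitative part
  set Y := ystar x with hYdef
  set δ := ‖yD - Y‖ with hδdef
  have hδ0 : 0 ≤ δ := norm_nonneg _
  set m : ℝ := M / μ with hmdef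
  have hm0 : 0 ≤ m := by positivity
  set C : ℝ := κ + ρ * M / μ ^ 2 with hCdef
  have hC0 : 0 ≤ C := by rw [hCdef]; positivity
  set vhat := Hinv x yD (gradyf x yD) with hvhatdef
  have hvhatvstar : ‖vhat - vstar‖ ≤ C * δ := by
    have h1 : Hinv x yD ((Hg x yD) vstar) = vstar := hHinvHg yD vstar
    have hsplit : vhat - vstar
        = Hinv x yD (gradyf x yD - gradyf x Y) + Hinv x yD (Hg x Y vstar - Hg x yD vstar) := by
      rw [← map_add]
      calc vhat - vstar = Hinv x yD (gradyf x yD) - Hinv x yD (Hg x yD vstar) := by rw [h1]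
        _ = Hinv x yD (gradyf x yD - Hg x yD vstar) := (map_sub _ _ _).symm
        _ = Hinv x yD ((gradyf x yD - gradyf x Y) + (Hg x Y vstar - Hg x yD vstar)) := by
            rw [← hvstar]; congr 1; abel
    have hn1 : ‖Hinv x yD (gradyf x yD - gradyf x Y)‖ ≤ μ⁻¹ * (L * δ) := by
      refine le_trans (hHinvB yD _) ?_
      exact mul_le_mul_of_nonneg_left (hyfLip yD Y) (by positivity)
    have hn2 : ‖Hinv x yD (Hg x Y vstar - Hg x yD vstar)‖ ≤ μ⁻¹ * (ρ * δ * (M / μ)) := by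
      refine le_trans (hHinvB yD _) ?_
      apply mul_le_mul_of_nonneg_left ?_ (by positivity : (0:ℝ) ≤ μ⁻¹)
      have h2 : Hg x Y vstar - Hg x yD vstar = (Hg x Y - Hg x yD) vstar := by
        simp [ContinuousLinearMap.sub_apply]
      rw [h2]
      calc ‖(Hg x Y - Hg x yD) vstar‖ ≤ ‖Hg x Y - Hg x yD‖ * ‖vstar‖ :=
            ContinuousLinearMap.le_opNorm _ _
        _ ≤ (ρ * ‖Y - yD‖) * (M / μ) := by
            apply mul_le_mul (hHLip Y yD) hvstarM (norm_nonneg _)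
            positivity
        _ = ρ * δ * (M / μ) := by rw [norm_sub_rev]
    calc ‖vhat - vstar‖ ≤ ‖Hinv x yD (gradyf x yD - gradyf x Y)‖
          + ‖Hinv x yD (Hg x Y vstar - Hg x yD vstar)‖ := by rw [hsplit]; exact norm_add_le _ _
      _ ≤ μ⁻¹ * (L * δ) + μ⁻¹ * (ρ * δ * (M / μ)) := add_le_add hn1 hn2
      _ = C * δ := by rw [hCdef, hκ]; field_simp
  set V := ‖vstar - v0‖ with hVdef
  have hV0 : 0 ≤ V := norm_nonneg _
  have hv0hat : ‖v0 - vhat‖ ≤ V + C * δ := by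
    calc ‖v0 - vhat‖ = ‖(v0 - vstar) + (vstar - vhat)‖ := by congr 1; abel
      _ ≤ ‖v0 - vstar‖ + ‖vstar - vhat‖ := norm_add_le _ _
      _ ≤ V + C * δ := by
          rw [norm_sub_rev v0 vstar, norm_sub_rev vstar vhat]
          exact add_le_add le_rfl hvhatvstar
  set s : ℝ := Real.sqrt κ * r ^ N with hsdef
  have hs0 : 0 ≤ s := by positivity
  have hsκ' : s ≤ Real.sqrt κ := by
    rw [hsdef]
    exact mul_le_of_le_one_right (Real.sqrt_nonneg κ) hrN1
  set K : ℝ := (1 + Real.sqrt κ) * C with hKdef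
  have hK0 : 0 ≤ K := by positivity
  set W := ‖vN - vstar‖ with hWdef
  have hW0 : 0 ≤ W := norm_nonneg _
  have hWbound : W ≤ s * V + K * δ := by
    have h1 : W ≤ ‖vN - vhat‖ + ‖vhat - vstar‖ := by
      rw [hWdef]
      calc ‖vN - vstar‖ = ‖(vN - vhat) + (vhat - vstar)‖ := by congr 1; abel
        _ ≤ _ := norm_add_le _ _
    have h2 : ‖vN - vhat‖ ≤ s * ‖v0 - vhat‖ := hvNcg
    have h3 : ‖vN - vhat‖ ≤ s * (V + C * δ) := le_trans h2 (mul_le_mul_of_nonneg_left hv0hat hs0)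
    have h5 : s * (C * δ) ≤ Real.sqrt κ * (C * δ) :=
      mul_le_mul_of_nonneg_right hsκ' (mul_nonneg hC0 hδ0)
    have h6 : s * (V + C * δ) = s * V + s * (C * δ) := by ring
    have h7 : K * δ = Real.sqrt κ * (C * δ) + C * δ := by rw [hKdef]; ring
    linarith [hvhatvstar]
  -- error decomposition
  have hrw : gradxf x yD - Jg x yD vN - gPhi
      = (gradxf x yD - gradxf x Y) - (Jg x yD - Jg x Y) vstar - Jg x yD (vN - vstar) := by
    rw [hkey]
    simp only [ContinuousLinearMap.sub_apply, map_sub]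
    abel
  set E1 := gradxf x yD - gradxf x Y with hE1
  set E2 := (Jg x yD - Jg x Y) vstar with hE2
  set E3 := Jg x yD (vN - vstar) with hE3
  have ha : ‖E1‖ ≤ L * δ := hxfLip yD Y
  have hb : ‖E2‖ ≤ τ * δ * m := by
    calc ‖E2‖ ≤ ‖Jg x yD - Jg x Y‖ * ‖vstar‖ := ContinuousLinearMap.le_opNorm _ _
      _ ≤ (τ * δ) * m := by
          apply mul_le_mul (hJLip yD Y) hvstarM (norm_nonneg _) (by positivity)
      _ = τ * δ * m := rfl
  have hc : ‖E3‖ ≤ L * W := by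
    calc ‖E3‖ ≤ ‖Jg x yD‖ * W := ContinuousLinearMap.le_opNorm _ _
      _ ≤ L * W := mul_le_mul_of_nonneg_right (hJB yD) hW0
  have htri : ‖gradxf x yD - Jg x yD vN - gPhi‖ ≤ ‖E1‖ + ‖E2‖ + ‖E3‖ := by
    rw [hrw]
    calc ‖E1 - E2 - E3‖ ≤ ‖E1 - E2‖ + ‖E3‖ := norm_sub_le _ _
      _ ≤ ‖E1‖ + ‖E2‖ + ‖E3‖ := by
          have := norm_sub_le E1 E2
          linarith
  have hsum : ‖E1‖ + ‖E2‖ + ‖E3‖ ≤ L * δ + τ * δ * m + L * W := by linarith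
  have hsq : ‖gradxf x yD - Jg x yD vN - gPhi‖ ^ 2 ≤ (L * δ + τ * δ * m + L * W) ^ 2 :=
    pow_le_pow_left₀ (norm_nonneg _) (le_trans htri hsum) 2
  have h3sq : (L * δ + τ * δ * m + L * W) ^ 2
      ≤ 3 * (L * δ) ^ 2 + 3 * (τ * δ * m) ^ 2 + 3 * (L * W) ^ 2 := by
    nlinarith only [sq_nonneg (L * δ - τ * δ * m), sq_nonneg (L * δ - L * W),
      sq_nonneg (τ * δ * m - L * W)]
  have hW2 : W ^ 2 ≤ 2 * s ^ 2 * V ^ 2 + 2 * K ^ 2 * δ ^ 2 := by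
    have hW2a : W ^ 2 ≤ (s * V + K * δ) ^ 2 := pow_le_pow_left₀ hW0 hWbound 2
    have hW2b : (s * V + K * δ) ^ 2 ≤ 2 * s ^ 2 * V ^ 2 + 2 * K ^ 2 * δ ^ 2 := by
      nlinarith only [sq_nonneg (s * V - K * δ)]
    linarith only [hW2a, hW2b]
  have hs2 : s ^ 2 = κ * r ^ (2 * N) := by
    rw [hsdef, mul_pow, Real.sq_sqrt hκ0, ← pow_mul r N 2, mul_comm N 2]
  have hδ2 : δ ^ 2 ≤ (1 - α * μ) ^ D * ‖Y - y0‖ ^ 2 := by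
    rw [hδdef, norm_sub_rev Y y0]
    exact hyD
  have hΓeq : Γ = 3 * L ^ 2 + 3 * τ ^ 2 * m ^ 2 + 6 * L ^ 2 * K ^ 2 := by
    rw [hΓ, hmdef, hKdef, hCdef, div_pow, mul_pow]
    ring
  have hmain : ‖gradxf x yD - Jg x yD vN - gPhi‖ ^ 2
      ≤ Γ * δ ^ 2 + 6 * L ^ 2 * κ * r ^ (2 * N) * V ^ 2 := by
    have hL2 : (0:ℝ) ≤ 3 * L ^ 2 := by positivity
    calc ‖gradxf x yD - Jg x yD vN - gPhi‖ ^ 2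
        ≤ (L * δ + τ * δ * m + L * W) ^ 2 := hsq
      _ ≤ 3 * (L * δ) ^ 2 + 3 * (τ * δ * m) ^ 2 + 3 * (L * W) ^ 2 := h3sq
      _ = 3 * L ^ 2 * δ ^ 2 + 3 * τ ^ 2 * m ^ 2 * δ ^ 2 + 3 * L ^ 2 * W ^ 2 := by ring
      _ ≤ 3 * L ^ 2 * δ ^ 2 + 3 * τ ^ 2 * m ^ 2 * δ ^ 2
          + 3 * L ^ 2 * (2 * s ^ 2 * V ^ 2 + 2 * K ^ 2 * δ ^ 2) := by
          have := mul_le_mul_of_nonneg_left hW2 hL2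
          linarith
      _ = (3 * L ^ 2 + 3 * τ ^ 2 * m ^ 2 + 6 * L ^ 2 * K ^ 2) * δ ^ 2
          + 6 * L ^ 2 * s ^ 2 * V ^ 2 := by ring
      _ = Γ * δ ^ 2 + 6 * L ^ 2 * κ * r ^ (2 * N) * V ^ 2 := by
          rw [hΓeq, hs2]; ring
  have hfinal : Γ * δ ^ 2 ≤ Γ * ((1 - α * μ) ^ D * ‖Y - y0‖ ^ 2) :=
    mul_le_mul_of_nonneg_left hδ2 hΓ0
  calc ‖gradxf x yD - Jg x yD vN - gPhi‖ ^ 2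
      ≤ Γ * δ ^ 2 + 6 * L ^ 2 * κ * r ^ (2 * N) * V ^ 2 := hmain
    _ ≤ Γ * ((1 - α * μ) ^ D * ‖Y - y0‖ ^ 2) + 6 * L ^ 2 * κ * r ^ (2 * N) * V ^ 2 := by
        linarith
    _ = Γ * (1 - α * μ) ^ D * ‖Y - y0‖ ^ 2 + 6 * L ^ 2 * κ * r ^ (2 * N) * ‖vstar - v0‖ ^ 2 := by
        rw [hVdef]; ring
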